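/- arXiv:1411.2313 — 3 statements merged into one kernel-verified Lean document; each statement's English description precedes it below -/
import Mathlib

section
/- Let n₁, n₂, n₃ be odd positive integers and set m = 1 + 2·n₁² + 2·n₂² + 2·n₃². If nᵢ² divides m for each i = 1, 2, 3, then n₁ = n₂ = n₃ = 1 (and hence m = 7). -/
lemma odd_sq_mod8 (n : ℕ) (h : Odd n) : ∃ t, n ^ 2 = 8 * t + 1 := by
  obtain ⟨j, rfl⟩ := h
  obtain ⟨c, hc⟩ := Nat.even_mul_succ_self j
  have he : (2 * j + 1) ^ 2 = 4 * (j * (j + 1)) + 1 := by ring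
  exact ⟨c, by omega⟩

lemma key (n m : ℕ) (hn : Odd n) (hd : n ^ 2 ∣ m) (hm8 : m % 8 = 7)
    (hle : m ≤ 6 * n ^ 2 + 1) : n = 1 := by
  by_contra h
  have hn3 : 3 ≤ n := by
    rcases hn with ⟨j, rfl⟩; omega
  have hsq : 9 ≤ n ^ 2 := by nlinarith
  obtain ⟨k, hk⟩ := hd
  obtain ⟨t, ht⟩ := odd_sq_mod8 n hn
  have hmk : m = 8 * (t * k) + k := by rw [hk, ht]; ring
  have hk8 : k % 8 = 7 := by omega
  have h7 : n ^ 2 * 7 ≤ n ^ 2 * k := Nat.mul_le_mul_left _ (by omega)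
  omega

theorem stmt_5 (n₁ n₂ n₃ : ℕ) (h₁ : 0 < n₁) (h₂ : 0 < n₂) (h₃ : 0 < n₃)
    (o₁ : Odd n₁) (o₂ : Odd n₂) (o₃ : Odd n₃)
    (m : ℕ) (hm : m = 1 + 2 * n₁ ^ 2 + 2 * n₂ ^ 2 + 2 * n₃ ^ 2)
    (d₁ : n₁ ^ 2 ∣ m) (d₂ : n₂ ^ 2 ∣ m) (d₃ : n₃ ^ 2 ∣ m) :
    n₁ = 1 ∧ n₂ = 1 ∧ n₃ = 1 ∧ m = 7 := by
  obtain ⟨t₁, ht₁⟩ := odd_sq_mod8 n₁ o₁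
  obtain ⟨t₂, ht₂⟩ := odd_sq_mod8 n₂ o₂
  obtain ⟨t₃, ht₃⟩ := odd_sq_mod8 n₃ o₃
  have hm8 : m % 8 = 7 := by omega
  set N := max n₁ (max n₂ n₃) with hN
  have hmaxeq : N = n₁ ∨ N = n₂ ∨ N = n₃ := by
    rcases le_total n₁ (max n₂ n₃) with h | h <;>
      rcases le_total n₂ n₃ with h' | h' <;> simp_all [max_def] <;> omega
  have hN1 : n₁ ≤ N := le_max_left _ _
  have hN2 : n₂ ≤ N := le_trans (le_max_left _ _) (le_max_right _ _)
  have hN3 : n₃ ≤ N := le_trans (le_max_right _ _) (le_max_right _ _)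
  have hNodd : Odd N := by rcases hmaxeq with h | h | h <;> rw [h] <;> assumption
  have hNd : N ^ 2 ∣ m := by rcases hmaxeq with h | h | h <;> rw [h] <;> assumption
  have hble : m ≤ 6 * N ^ 2 + 1 := by
    have b₁ := Nat.pow_le_pow_left hN1 2
    have b₂ := Nat.pow_le_pow_left hN2 2
    have b₃ := Nat.pow_le_pow_left hN3 2
    omega
  have hNone : N = 1 := key N m hNodd hNd hm8 hble
  have : n₁ = 1 ∧ n₂ = 1 ∧ n₃ = 1 := by omega
  refine ⟨this.1, this.2.1, this.2.2, ?_⟩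
  subst hm; rw [this.1, this.2.1, this.2.2]; norm_num
end

section
/- Let a and b be odd positive integers and set m = 1 + a² + 2·b². If a² divides m and b² divides m, then a = b = 1 (and hence m = 4). -/
theorem stmt_6 (a b : ℕ) (ha : 0 < a) (hb : 0 < b) (oa : Odd a) (ob : Odd b)
    (m : ℕ) (hm : m = 1 + a ^ 2 + 2 * b ^ 2)
    (da : a ^ 2 ∣ m) (db : b ^ 2 ∣ m) :
    a = 1 ∧ b = 1 ∧ m = 4 := by
  have hga : Nat.gcd a b ∣ m :=
    ((Nat.gcd_dvd_left a b).trans (dvd_pow_self a (by norm_num))).trans da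
  have hgb : Nat.gcd a b ∣ a ^ 2 + 2 * b ^ 2 :=
    dvd_add ((Nat.gcd_dvd_left a b).trans (dvd_pow_self a (by norm_num)))
      (Dvd.dvd.mul_left ((Nat.gcd_dvd_right a b).trans (dvd_pow_self b (by norm_num))) 2)
  have hg1 : Nat.gcd a b ∣ 1 := by
    have := Nat.dvd_sub hga hgb
    have hms : m - (a ^ 2 + 2 * b ^ 2) = 1 := by omega
    rwa [hms] at this
  have hco : Nat.Coprime a b := Nat.dvd_one.mp hg1
  have hdvd : a ^ 2 * b ^ 2 ∣ m := (Nat.Coprime.pow 2 2 hco : Nat.Coprime (a^2) (b^2)).mul_dvd_of_dvd_of_dvd da db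
  have hle : a ^ 2 * b ^ 2 ≤ m := Nat.le_of_dvd (by omega) hdvd
  have ha1 : a = 1 := by
    by_contra h
    have ha3 : 3 ≤ a := by rcases oa with ⟨k, hk⟩; omega
    rcases eq_or_ne b 1 with hb1 | hb1
    · subst hb1
      have h3 : a ^ 2 ∣ 3 := by
        have := Nat.dvd_sub da (dvd_refl (a ^ 2))
        have hms : m - a ^ 2 = 3 := by omega
        rwa [hms] at this
      have := Nat.le_of_dvd (by norm_num) h3
      nlinarith
    · have hb3 : 3 ≤ b := by rcases ob with ⟨k, hk⟩; omega
      have h9a : 9 ≤ a ^ 2 := by nlinarith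
      have h9b : 9 ≤ b ^ 2 := by nlinarith
      have t1 : 9 * b ^ 2 ≤ a ^ 2 * b ^ 2 := Nat.mul_le_mul h9a (le_refl _)
      have t2 : 9 * a ^ 2 ≤ a ^ 2 * b ^ 2 := by
        have := Nat.mul_le_mul h9b (le_refl (a ^ 2)); linarith [this, Nat.mul_comm (b ^ 2) (a ^ 2)]
      have t3 : 81 ≤ a ^ 2 * b ^ 2 := Nat.mul_le_mul h9a h9b
      linarith
  subst ha1
  have hb1 : b = 1 := by
    have h2 : b ^ 2 ∣ 2 := by
      have := Nat.dvd_sub db (Dvd.dvd.mul_left (dvd_refl (b ^ 2)) 2)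
      have hms : m - 2 * b ^ 2 = 2 := by omega
      rwa [hms] at this
    have := Nat.le_of_dvd (by norm_num) h2
    nlinarith
  subst hb1
  refine ⟨rfl, rfl, by omega⟩
end

section
/- Let a ≤ b be positive integers such that both a and b divide D = 1 + 3·a + 3·b. Then a and b are coprime, a·b divides D, b divides 1 + 3·a, D ≤ 7·b, and a ≤ 7. -/
theorem stmt_11 (a b : ℕ) (ha : 0 < a) (hb : 0 < b) (hab : a ≤ b)
    (hda : a ∣ 1 + 3 * a + 3 * b) (hdb : b ∣ 1 + 3 * a + 3 * b) :
    Nat.Coprime a b ∧ a * b ∣ 1 + 3 * a + 3 * b ∧ b ∣ 1 + 3 * a ∧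
      1 + 3 * a + 3 * b ≤ 7 * b ∧ a ≤ 7 := by
  have hcop : Nat.Coprime a b := by
    have h1 : Nat.gcd a b ∣ 1 + 3 * a + 3 * b :=
      (Nat.gcd_dvd_left a b).trans hda
    have h2 : Nat.gcd a b ∣ 3 * a + 3 * b :=
      Dvd.dvd.add (Dvd.dvd.mul_left (Nat.gcd_dvd_left a b) 3)
        (Dvd.dvd.mul_left (Nat.gcd_dvd_right a b) 3)
    have : Nat.gcd a b ∣ 1 := by
      have := (Nat.dvd_sub h1 h2)
      have h3 : 1 + 3 * a + 3 * b - (3 * a + 3 * b) = 1 := by omega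
      rwa [h3] at this
    exact Nat.eq_one_of_dvd_one this
  have hmul : a * b ∣ 1 + 3 * a + 3 * b := hcop.mul_dvd_of_dvd_of_dvd hda hdb
  have hb13 : b ∣ 1 + 3 * a := by
    have h2 : b ∣ 3 * b := Dvd.dvd.mul_left dvd_rfl 3
    have := Nat.dvd_sub hdb h2
    simpa using this
  have hle : 1 + 3 * a + 3 * b ≤ 7 * b := by omega
  have ha7 : a ≤ 7 := by
    have := Nat.le_of_dvd (by omega) hmul
    have : a * b ≤ 7 * b := this.trans hle
    exact le_of_mul_le_mul_right (by omega) hb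
  exact ⟨hcop, hmul, hb13, hle, ha7⟩
end
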